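/- Assume the eigenvalues are strictly ordered t_1 > t_2 > ⋯ > t_n. Let μ ∈ ℝ and 1 ≤ i < m with t_i ≠ μ. Then the second-order truncation error satisfies ‖Σ_{k=m+1}^{n} (⟨E v_i, v_k⟩/(t_i − t_k)) v_k − [ (1/(t_i − μ)) r_i − (μ/(t_i − μ)²) r_i + (1/(t_i − μ)²) A' r_i ]‖ ≤ (Σ_{k=m+1}^{n} |t_k − μ|²) · ‖E‖₂ / (|t_i − t_m| · |t_i − μ|²). -/

import Mathlib

open Matrix Finset

/-!
Expanding in the eigenbasis, `r_i = ∑_{k>m} ⟨E v_i, v_k⟩ v_k` lies in the span of the trailing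
eigenvectors, where `A'` acts by `t_k`. The bracketed approximation therefore replaces the exact
coefficient `1 / (t_i - t_k)` by its first-order Taylor polynomial in `t_k` around `μ`, and the
error in each coefficient is the remainder `(t_k - μ)² / ((t_i - μ)² (t_i - t_k))`. Bounding
`|⟨E v_i, v_k⟩| ≤ ‖E‖₂`, using `t_i - t_k > t_i - t_m > 0` for `k > m` from the strict ordering, and
applying the triangle inequality to the unit vectors `v_k` gives the claim. (Indices here are the
paper's; in the 0-based formal statement `t_m` is `t ⟨m - 1, _⟩` and `k > m` reads `m ≤ k`.)
-/

theorem sum_dotProduct_smul_eq_of_orthonormal {ι : Type*} [Fintype ι] [DecidableEq ι]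
    {v : ι → ι → ℝ}
    (hortho : ∀ k l, v k ⬝ᵥ v l = if k = l then 1 else 0) (w : ι → ℝ) :
    ∑ k, (v k ⬝ᵥ w) • v k = w := by
  have hrows : of v * (of v)ᵀ = 1 := by
    ext k l
    simpa [mul_apply, one_apply, dotProduct] using hortho k l
  have hcols : (of v)ᵀ * of v = 1 := mul_eq_one_comm.mp hrows
  calc ∑ k, (v k ⬝ᵥ w) • v k = (of v)ᵀ *ᵥ (of v *ᵥ w) := by
        rw [mulVec_transpose, vecMul_eq_sum]; rfl
    _ = w := by rw [mulVec_mulVec, hcols, one_mulVec]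

theorem norm_toLp_eq_one {ι : Type*} [Fintype ι] {x : ι → ℝ} (hx : x ⬝ᵥ x = 1) :
    ‖WithLp.toLp 2 x‖ = 1 := by
  have hsq : ‖WithLp.toLp 2 x‖ ^ 2 = 1 := by
    rw [← real_inner_self_eq_norm_sq, EuclideanSpace.inner_toLp_toLp]
    simpa using hx
  exact (pow_eq_one_iff_of_nonneg (norm_nonneg _) two_ne_zero).mp hsq

theorem abs_mulVec_dotProduct_le_norm_toEuclideanCLM {ι : Type*} [Fintype ι] [DecidableEq ι]
    (E : Matrix ι ι ℝ) {x y : ι → ℝ} (hx : x ⬝ᵥ x = 1) (hy : y ⬝ᵥ y = 1) :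
    |E *ᵥ x ⬝ᵥ y| ≤ ‖toEuclideanCLM (𝕜 := ℝ) E‖ := by
  set T := toEuclideanCLM (𝕜 := ℝ) E
  calc |E *ᵥ x ⬝ᵥ y| = |inner ℝ (WithLp.toLp 2 y) (T (WithLp.toLp 2 x))| := by
        rw [inner_toEuclideanCLM, dotProduct_comm]
    _ ≤ ‖WithLp.toLp 2 y‖ * (‖T‖ * ‖WithLp.toLp 2 x‖) :=
        (abs_real_inner_le_norm _ _).trans (by gcongr; exact T.le_opNorm _)
    _ = ‖T‖ := by rw [norm_toLp_eq_one hx, norm_toLp_eq_one hy, one_mul, mul_one]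

theorem norm_toLp_sum_smul_le {ι κ : Type*} [Fintype κ] {v : ι → κ → ℝ}
    (hv : ∀ k, v k ⬝ᵥ v k = 1) (s : Finset ι) (d : ι → ℝ) :
    ‖WithLp.toLp 2 (∑ k ∈ s, d k • v k)‖ ≤ ∑ k ∈ s, |d k| := by
  rw [WithLp.toLp_sum]
  refine (norm_sum_le _ _).trans_eq (sum_congr rfl fun k _ => ?_)
  rw [WithLp.toLp_smul, norm_smul, norm_toLp_eq_one (hv k), Real.norm_eq_abs, mul_one]

theorem mulVec_sum_smul_of_eigenvectors {ι κ : Type*} [Fintype κ] {A : Matrix κ κ ℝ}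
    {v : ι → κ → ℝ} {t : ι → ℝ} (heig : ∀ k, A *ᵥ v k = t k • v k) (s : Finset ι) (c : ι → ℝ) :
    A *ᵥ ∑ k ∈ s, c k • v k = ∑ k ∈ s, (t k * c k) • v k := by
  simp only [mulVec_sum, mulVec_smul, heig, smul_smul, mul_comm]

theorem mul_transpose_mulVec_eq_sum_lt {n m : ℕ} (hmn : m ≤ n) {v : Fin n → Fin n → ℝ}
    {V : Matrix (Fin n) (Fin m) ℝ} (hV : ∀ p j, V p j = v (Fin.castLE hmn j) p) (w : Fin n → ℝ) :
    (V * Vᵀ) *ᵥ w = ∑ k ∈ univ.filter (fun k : Fin n => (k : ℕ) < m), (v k ⬝ᵥ w) • v k := by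
  have hcols : Vᵀ = fun j => v (Fin.castLE hmn j) := by ext j p; exact hV p j
  have himage : univ.map (Fin.castLEEmb hmn) = univ.filter (fun k : Fin n => (k : ℕ) < m) := by
    ext k
    simpa using ⟨fun ⟨a, ha⟩ => ha ▸ a.isLt, fun h => ⟨⟨k, h⟩, rfl⟩⟩
  rw [← mulVec_mulVec, ← himage, sum_map, mulVec_eq_sum]
  refine sum_congr rfl fun j _ => ?_
  rw [op_smul_eq_smul, hcols]
  rfl

theorem one_sub_mul_transpose_mulVec_eq_sum_ge {n m : ℕ} (hmn : m ≤ n) {v : Fin n → Fin n → ℝ}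
    (hortho : ∀ k l, v k ⬝ᵥ v l = if k = l then 1 else 0)
    {V : Matrix (Fin n) (Fin m) ℝ} (hV : ∀ p j, V p j = v (Fin.castLE hmn j) p) (w : Fin n → ℝ) :
    (1 - V * Vᵀ) *ᵥ w = ∑ k ∈ univ.filter (fun k : Fin n => m ≤ (k : ℕ)), (v k ⬝ᵥ w) • v k := by
  rw [sub_mulVec, one_mulVec, mul_transpose_mulVec_eq_sum_lt hmn hV]
  have hsplit := (sum_filter_add_sum_filter_not univ (fun k : Fin n => (k : ℕ) < m) _).trans
    (sum_dotProduct_smul_eq_of_orthonormal hortho w)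
  simp only [not_lt] at hsplit
  exact sub_eq_of_eq_add' hsplit.symm

theorem one_div_sub_eq_linear_add_remainder {a x μ : ℝ} (hμ : a ≠ μ) (hx : a ≠ x) :
    1 / (a - x) = 1 / (a - μ) + (x - μ) / (a - μ) ^ 2 + (x - μ) ^ 2 / ((a - μ) ^ 2 * (a - x)) := by
  have : a - μ ≠ 0 := sub_ne_zero.mpr hμ
  have : a - x ≠ 0 := sub_ne_zero.mpr hx
  field_simp
  ring

theorem abs_mul_sq_div_le {a b x μ c M : ℝ} (hμ : a ≠ μ) (hxb : x ≤ b) (hba : b < a)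
    (hc : |c| ≤ M) :
    |c * ((x - μ) ^ 2 / ((a - μ) ^ 2 * (a - x)))| ≤ |x - μ| ^ 2 * M / (|a - b| * |a - μ| ^ 2) := by
  have hμ' : 0 < (a - μ) ^ 2 := by positivity [sub_ne_zero.mpr hμ]
  have hb : 0 < a - b := sub_pos.mpr hba
  have hx : 0 < a - x := by linarith
  rw [abs_mul, abs_of_nonneg (div_nonneg (sq_nonneg _) (mul_pos hμ' hx).le), sq_abs, sq_abs,
    abs_of_pos hb,
    show (x - μ) ^ 2 * M / ((a - b) * (a - μ) ^ 2) = M * ((x - μ) ^ 2 / ((a - μ) ^ 2 * (a - b)))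
      by ring]
  gcongr
  exact (abs_nonneg c).trans hc

/-- Error bound for the second-order truncated perturbation formula. -/
theorem second_order_truncation_error_bound {n m : ℕ} (hmn : m ≤ n)
    (A' E : Matrix (Fin n) (Fin n) ℝ)
    (t : Fin n → ℝ) (v : Fin n → Fin n → ℝ)
    (hortho : ∀ k l : Fin n, v k ⬝ᵥ v l = if k = l then 1 else 0)
    (heig : ∀ k : Fin n, A'.mulVec (v k) = t k • v k)
    (hord : ∀ k l : Fin n, k < l → t l < t k)
    (V : Matrix (Fin n) (Fin m) ℝ)
    (hV : ∀ (p : Fin n) (j : Fin m), V p j = v (Fin.castLE hmn j) p)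
    (i : Fin n) (hi : (i : ℕ) + 1 < m)
    (r : Fin n → ℝ)
    (hr : r = ((1 : Matrix (Fin n) (Fin n) ℝ) - V * Vᵀ).mulVec (E.mulVec (v i)))
    (μ : ℝ) (hμ : t i ≠ μ) :
    ‖(WithLp.equiv 2 (Fin n → ℝ)).symm
        ((∑ k ∈ Finset.univ.filter (fun k : Fin n => m ≤ (k : ℕ)),
            ((E.mulVec (v i) ⬝ᵥ v k) / (t i - t k)) • v k)
          - ((1 / (t i - μ)) • r - (μ / (t i - μ) ^ 2) • r
              + (1 / (t i - μ) ^ 2) • A'.mulVec r))‖ ≤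
      (∑ k ∈ Finset.univ.filter (fun k : Fin n => m ≤ (k : ℕ)), |t k - μ| ^ 2)
        * ‖Matrix.toEuclideanCLM (𝕜 := ℝ) E‖
        / (|t i - t ⟨m - 1, by omega⟩| * |t i - μ| ^ 2) := by
  set S := univ.filter (fun k : Fin n => m ≤ (k : ℕ))
  set c : Fin n → ℝ := fun k => E *ᵥ v i ⬝ᵥ v k
  have hunit k : v k ⬝ᵥ v k = 1 := by simpa using hortho k k
  have hgap : ∀ k ∈ S, t k < t ⟨m - 1, by omega⟩ ∧ t ⟨m - 1, by omega⟩ < t i := by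
    intro k hk
    have hk : m ≤ (k : ℕ) := (mem_filter.mp hk).2
    exact ⟨hord _ _ (Fin.lt_def.mpr (show m - 1 < (k : ℕ) by omega)),
      hord _ _ (Fin.lt_def.mpr (show (i : ℕ) < m - 1 by omega))⟩
  have hr' : r = ∑ k ∈ S, c k • v k := by
    rw [hr, one_sub_mul_transpose_mulVec_eq_sum_ge hmn hortho hV]
    simp only [S, c, dotProduct_comm]
  have hremainder : (∑ k ∈ S, (c k / (t i - t k)) • v k)
      - ((1 / (t i - μ)) • r - (μ / (t i - μ) ^ 2) • r + (1 / (t i - μ) ^ 2) • A' *ᵥ r)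
      = ∑ k ∈ S, (c k * ((t k - μ) ^ 2 / ((t i - μ) ^ 2 * (t i - t k)))) • v k := by
    rw [hr', mulVec_sum_smul_of_eigenvectors heig, smul_sum, smul_sum, smul_sum,
      ← sum_sub_distrib, ← sum_add_distrib, ← sum_sub_distrib]
    refine sum_congr rfl fun k hk => ?_
    have hne : t i ≠ t k := ((hgap k hk).1.trans (hgap k hk).2).ne'
    rw [div_eq_mul_one_div (c k), one_div_sub_eq_linear_add_remainder hμ hne]
    module
  rw [hremainder, sum_mul, sum_div]
  refine (norm_toLp_sum_smul_le hunit S _).trans (sum_le_sum fun k hk => ?_)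
  exact abs_mul_sq_div_le hμ (hgap k hk).1.le (hgap k hk).2
    (abs_mulVec_dotProduct_le_norm_toEuclideanCLM E (hunit i) (hunit k))
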